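/- arXiv:1101.3494 — 4 statements merged into one kernel-verified Lean document; each statement's English description precedes it below -/
import Mathlib

section
/- If a simple graph G is perfectly colorable, then G is perfect. -/
/-- The paw graph: vertices `a = 0`, `b = 1`, `c = 2`, `d = 3`,
with edge set `{ab, ac, bc, cd}`. -/
def pawGraph : SimpleGraph (Fin 4) :=
  SimpleGraph.fromEdgeSet {s(0, 1), s(0, 2), s(1, 2), s(2, 3)}

/-- A graph is paw-free if no induced subgraph is isomorphic to the paw. -/
def SimpleGraph.PawFree {V : Type*} (G : SimpleGraph V) : Prop :=
  ¬ ∃ S : Set V, Nonempty (G.induce S ≃g pawGraph)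

/-- A graph is perfect if every induced subgraph has chromatic number
equal to its clique number. -/
def SimpleGraph.IsPerfect {V : Type*} (G : SimpleGraph V) : Prop :=
  ∀ S : Set V, (G.induce S).chromaticNumber = ((G.induce S).cliqueNum : ℕ∞)

/-- A proper coloring is a perfect coloring if every vertex set `S` inducing a
connected subgraph sees exactly `ω(G[S])` distinct colors. -/
def SimpleGraph.IsPerfectColoring {V α : Type*} (G : SimpleGraph V) (C : G.Coloring α) :
    Prop :=
  ∀ S : Set V, (G.induce S).Connected → (⇑C '' S).ncard = (G.induce S).cliqueNum

/-- A graph is perfectly colorable if it admits a perfect coloring. -/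
def SimpleGraph.PerfectlyColorable {V : Type*} (G : SimpleGraph V) : Prop :=
  ∃ (α : Type) (C : G.Coloring α), G.IsPerfectColoring C

/-- A graph is complete multipartite iff non-adjacency is transitive. -/
def SimpleGraph.IsCompleteMultipartite' {V : Type*} (G : SimpleGraph V) : Prop :=
  Transitive fun v w => ¬ G.Adj v w

/-!
Restricting a perfect coloring to an induced subgraph (more generally, pulling it back along a
graph embedding) again gives a perfect coloring, so it suffices to show `χ(G) = ω(G)` for a finite
graph with a perfect coloring. On each connected component `K` the coloring uses exactly
`ω(G[K]) ≤ ω(G)` colors, and renaming the colors independently on every component yields an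
`ω(G)`-coloring of `G`.
-/

namespace SimpleGraph

variable {V W α : Type*} {G : SimpleGraph V} {H : SimpleGraph W}

theorem Hom.cliqueNum_le [Finite W] (f : G →g H) : G.cliqueNum ≤ H.cliqueNum := by
  classical
  obtain ⟨s, hs⟩ := G.exists_isNClique_cliqueNum
  -- adjacent vertices have adjacent, hence distinct, images
  have hinj : Set.InjOn f s := fun a ha b hb hab => by
    by_contra hne
    exact H.irrefl (hab ▸ f.map_adj (hs.isClique ha hb hne))
  have himage : H.IsClique (s.image f : Set W) := by
    rw [Finset.coe_image]
    rintro _ ⟨a, ha, rfl⟩ _ ⟨b, hb, rfl⟩ hne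
    exact f.map_adj (hs.isClique ha hb fun hab => hne (congrArg f hab))
  calc G.cliqueNum = (s.image f).card := by rw [Finset.card_image_of_injOn hinj, hs.card_eq]
    _ ≤ H.cliqueNum := himage.card_le_cliqueNum

theorem Iso.cliqueNum_eq [Finite V] [Finite W] (e : G ≃g H) : G.cliqueNum = H.cliqueNum :=
  le_antisymm e.toHom.cliqueNum_le e.symm.toHom.cliqueNum_le

theorem Coloring.colorable_ncard_range [Finite V] (C : G.Coloring α) :
    G.Colorable (Set.range C).ncard := by
  have : Fintype (Set.range C) := Fintype.ofFinite _
  rw [← Nat.card_coe_set_eq, Nat.card_eq_fintype_card]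
  exact Coloring.colorable
    ⟨Set.rangeFactorization C, fun hadj heq => C.valid hadj (congrArg Subtype.val heq)⟩

namespace IsPerfectColoring

variable [Finite V] {C : G.Coloring α}

theorem colorable_cliqueNum (hC : G.IsPerfectColoring C) : G.Colorable G.cliqueNum := by
  refine colorable_iff_forall_connectedComponent.2 fun c => ?_
  have hrange : Set.range (C.comp c.toSimpleGraph_hom) = C '' c.supp := by
    rw [Hom.coe_comp, Set.range_comp]
    exact congrArg _ Subtype.range_coe
  have hcard : (C '' c.supp).ncard ≤ G.cliqueNum :=
    (hC c.supp c.connected_toSimpleGraph).trans_le (G.cliqueNum_induce_le c.supp)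
  exact (Coloring.colorable_ncard_range _).mono (hrange ▸ hcard)

theorem chromaticNumber_eq_cliqueNum (hC : G.IsPerfectColoring C) :
    G.chromaticNumber = G.cliqueNum :=
  le_antisymm hC.colorable_cliqueNum.chromaticNumber_le G.cliqueNum_le_chromaticNumber

theorem comp_embedding (hC : G.IsPerfectColoring C) (f : H ↪g G) :
    H.IsPerfectColoring (C.comp f.toHom) := by
  have : Finite W := Finite.of_injective f f.injective
  intro T hT
  let g : H.induce T ↪g G := f.comp (Embedding.induce T)
  have e : H.induce T ≃g G.induce (Set.range g) := g.isoInduceRange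
  have hrange : Set.range g = f '' T := by
    ext
    simp [g]
  have hcolors : C.comp f.toHom '' T = C '' Set.range g := by
    rw [hrange, Set.image_image]
    rfl
  rw [hcolors, hC _ (e.connected_iff.1 hT), e.cliqueNum_eq]

end IsPerfectColoring

end SimpleGraph

/-- If a simple graph is perfectly colorable, then it is perfect. -/
theorem isPerfect_of_perfectlyColorable {V : Type*} [Fintype V]
    (G : SimpleGraph V) (h : G.PerfectlyColorable) :
    G.IsPerfect := by
  obtain ⟨α, C, hC⟩ := h
  exact fun S => (hC.comp_embedding (SimpleGraph.Embedding.induce S)).chromaticNumber_eq_cliqueNum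
end

section
/- A simple graph G is perfect and paw-free if and only if every connected component of G is bipartite or complete multipartite. -/
/-!
A component containing a triangle `abc` is complete multipartite (Olariu): paw-freeness says that
a neighbour of one corner of a triangle is adjacent to one of the other two corners, so along any
edge the property of lying on a triangle propagates, as does the property of being adjacent to
`a` or `b`. In a connected graph every edge `xz` therefore lies on a triangle, and every vertex is
adjacent to `x` or `z`: non-adjacency is transitive. A triangle-free component has clique number
at most two, so perfection makes it 2-colourable.

Conversely, the paw is connected and lies in no bipartite graph (it has a triangle) and in no
complete multipartite graph (`a, d, b` violate transitivity of non-adjacency). Components of an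
induced subgraph embed into components of `G`, and both kinds of component are coloured with
their clique number of colours, so every induced subgraph has `χ = ω`.
-/

namespace SimpleGraph

variable {V W : Type*} {G : SimpleGraph V}

theorem isCompleteMultipartite'_iff : G.IsCompleteMultipartite' ↔ G.IsCompleteMultipartite :=
  ⟨fun h => ⟨fun _ _ _ h₁ h₂ => h h₁ h₂⟩, fun h _ _ _ => h.trans _ _ _⟩

theorem Preconnected.induction_on (hG : G.Preconnected) {P : V → Prop} (v w : V) (hv : P v)
    (h : ∀ ⦃u u'⦄, G.Adj u u' → P u → P u') : P w := by
  obtain ⟨p⟩ := hG v w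
  induction p with
  | nil => exact hv
  | cons hadj _ ih => exact ih (h hadj hv)

theorem pawFree_iff_not_isIndContained : G.PawFree ↔ ¬ pawGraph ⊴ G := by
  rw [isIndContained_iff_exists_iso_induce]
  exact not_congr ⟨fun ⟨s, ⟨e⟩⟩ => ⟨s, ⟨e.symm⟩⟩, fun ⟨s, ⟨e⟩⟩ => ⟨s, ⟨e.symm⟩⟩⟩

/-- No distinctness is needed: for `d = a` or `d = b` the conclusion holds anyway. -/
theorem pawFree_iff : G.PawFree ↔ ∀ ⦃a b c d : V⦄, G.Adj a b → G.Adj a c → G.Adj b c →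
    G.Adj c d → G.Adj a d ∨ G.Adj b d := by
  rw [pawFree_iff_not_isIndContained]
  constructor
  · intro hG a b c d hab hac hbc hcd
    by_contra! h
    have had : a ≠ d := fun e => h.2 (e ▸ hab.symm)
    have hbd : b ≠ d := fun e => h.1 (e ▸ hab)
    refine hG ⟨⟨![a, b, c, d], fun i j hij => ?_⟩, fun {i j} => ?_⟩
    · fin_cases i <;> fin_cases j <;> simp_all [hab.ne, hac.ne, hbc.ne, hcd.ne, eq_comm]
    · change G.Adj (![a, b, c, d] i) (![a, b, c, d] j) ↔ _
      fin_cases i <;> fin_cases j <;> simp_all [pawGraph, adj_comm]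
  · rintro h ⟨f⟩
    have hadj : ∀ i j, pawGraph.Adj i j → G.Adj (f i) (f j) := fun _ _ => f.map_adj_iff.2
    rcases h (hadj 0 1 (by simp [pawGraph])) (hadj 0 2 (by simp [pawGraph]))
      (hadj 1 2 (by simp [pawGraph])) (hadj 2 3 (by simp [pawGraph])) with h | h <;>
      simpa [pawGraph] using f.map_adj_iff.1 h

theorem PawFree.induce (hG : G.PawFree) (s : Set V) : (G.induce s).PawFree :=
  pawFree_iff.2 fun _ _ _ _ hab hac hbc hcd => pawFree_iff.1 hG hab hac hbc hcd

theorem Colorable.pawFree (h : G.Colorable 2) : G.PawFree := by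
  classical
  exact pawFree_iff.2 fun a b c _ hab hac hbc _ =>
    absurd (is3Clique_triple_iff.2 ⟨hab, hac, hbc⟩) (h.cliqueFree (by norm_num) _)

theorem IsCompleteMultipartite.pawFree (h : G.IsCompleteMultipartite) : G.PawFree :=
  pawFree_iff.2 fun a b _ d hab _ _ _ => by
    by_contra! h'
    exact h.trans a d b h'.1 (fun hdb => h'.2 hdb.symm) hab

theorem pawFree_of_forall_connectedComponent
    (h : ∀ C : G.ConnectedComponent, (G.induce C.supp).PawFree) : G.PawFree :=
  pawFree_iff.2 fun a b c d hab hac hbc hcd => by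
    let C := G.connectedComponentMk c
    have hc : c ∈ C.supp := rfl
    have hC := pawFree_iff.1 (h C)
    exact hC (a := ⟨a, C.mem_supp_of_adj_mem_supp hc hac.symm⟩)
      (b := ⟨b, C.mem_supp_of_adj_mem_supp hc hbc.symm⟩) (c := ⟨c, hc⟩)
      (d := ⟨d, C.mem_supp_of_adj_mem_supp hc hcd⟩) hab hac hbc hcd

theorem PawFree.exists_adj_adj_of_adj (hG : G.PawFree) {u p q w : V} (hpq : G.Adj p q)
    (hup : G.Adj u p) (huq : G.Adj u q) (huw : G.Adj u w) : ∃ t, G.Adj u t ∧ G.Adj w t :=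
  (pawFree_iff.1 hG hpq hup.symm huq.symm huw).elim (fun h => ⟨p, hup, h.symm⟩)
    (fun h => ⟨q, huq, h.symm⟩)

theorem PawFree.adj_or_adj_of_adj_of_adj (hG : G.PawFree) {a b c u w : V} (hab : G.Adj a b)
    (hac : G.Adj a c) (hbc : G.Adj b c) (hau : G.Adj a u) (huw : G.Adj u w) :
    G.Adj a w ∨ G.Adj b w := by
  rcases pawFree_iff.1 hG hbc hab.symm hac.symm hau with hbu | hcu
  · exact pawFree_iff.1 hG hab hau hbu huw
  · rcases pawFree_iff.1 hG hac hau hcu huw with haw | hcw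
    · exact Or.inl haw
    · exact pawFree_iff.1 hG hab hac hbc hcw

theorem PawFree.exists_adj_adj_of_preconnected (hG : G.PawFree) (hconn : G.Preconnected)
    {a b c x z : V} (hab : G.Adj a b) (hac : G.Adj a c) (hbc : G.Adj b c) (hxz : G.Adj x z) :
    ∃ t, G.Adj x t ∧ G.Adj z t := by
  have hx : ∃ p q, G.Adj x p ∧ G.Adj x q ∧ G.Adj p q := by
    refine hconn.induction_on (P := fun v => ∃ p q, G.Adj v p ∧ G.Adj v q ∧ G.Adj p q) a x
      ⟨b, c, hab, hac, hbc⟩ ?_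
    rintro u w huw ⟨p, q, hup, huq, hpq⟩
    obtain ⟨t, hut, hwt⟩ := hG.exists_adj_adj_of_adj hpq hup huq huw
    exact ⟨u, t, huw.symm, hwt, hut⟩
  obtain ⟨p, q, hxp, hxq, hpq⟩ := hx
  exact hG.exists_adj_adj_of_adj hpq hxp hxq hxz

theorem PawFree.adj_or_adj_of_preconnected (hG : G.PawFree) (hconn : G.Preconnected)
    {a b c : V} (hab : G.Adj a b) (hac : G.Adj a c) (hbc : G.Adj b c) (v : V) :
    G.Adj a v ∨ G.Adj b v :=
  hconn.induction_on a v (Or.inr hab.symm) fun _ _ huw =>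
    Or.rec (fun hau => hG.adj_or_adj_of_adj_of_adj hab hac hbc hau huw)
      (fun hbu => (hG.adj_or_adj_of_adj_of_adj hab.symm hbc hac hbu huw).symm)

theorem PawFree.isCompleteMultipartite_of_not_cliqueFree (hG : G.PawFree)
    (hconn : G.Preconnected) (h3 : ¬ G.CliqueFree 3) : G.IsCompleteMultipartite := by
  classical
  obtain ⟨s, hs⟩ := not_forall_not.1 h3
  obtain ⟨a, b, c, hab, hac, hbc, -⟩ := is3Clique_iff.1 hs
  by_contra hcm
  obtain ⟨y, x, z, hxz, hyx, hyz⟩ := exists_isPathGraph3Compl_of_not_isCompleteMultipartite hcm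
  obtain ⟨t, hxt, hzt⟩ := hG.exists_adj_adj_of_preconnected hconn hab hac hbc hxz
  rcases hG.adj_or_adj_of_preconnected hconn hxz hxt hzt y with h | h
  · exact hyx h.symm
  · exact hyz h.symm

theorem cliqueFree_iff_cliqueNum_lt [Finite V] {n : ℕ} : G.CliqueFree n ↔ G.cliqueNum < n := by
  constructor
  · intro h
    by_contra! hn
    obtain ⟨s, hs⟩ := G.exists_isNClique_cliqueNum
    exact h.mono hn s hs
  · rintro hn s hs
    exact hn.not_ge (hs.card_eq ▸ IsClique.card_le_cliqueNum (tc := hs.isClique))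

theorem IsCompleteMultipartite.colorable_cliqueNum [Finite V] (h : G.IsCompleteMultipartite) :
    G.Colorable G.cliqueNum := by
  simpa using h.colorable_of_cliqueFree (cliqueFree_iff_cliqueNum_lt.2 (Nat.lt_succ_self _))

theorem Colorable.colorable_cliqueNum_of_two [Finite V] (h : G.Colorable 2) :
    G.Colorable G.cliqueNum := by
  by_cases h2 : G.CliqueFree 2
  · rw [cliqueFree_two] at h2
    subst h2
    exact bot_isCompleteMultipartite.colorable_cliqueNum
  · exact h.mono (not_lt.1 (mt cliqueFree_iff_cliqueNum_lt.2 h2))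

theorem chromaticNumber_eq_cliqueNum_of_forall_connectedComponent [Finite V]
    (h : ∀ C : G.ConnectedComponent,
      (G.induce C.supp).Colorable 2 ∨ (G.induce C.supp).IsCompleteMultipartite) :
    G.chromaticNumber = G.cliqueNum := by
  refine le_antisymm ?_ G.cliqueNum_le_chromaticNumber
  refine chromaticNumber_le_iff_colorable.2 (colorable_iff_forall_connectedComponent.2 fun C => ?_)
  exact ((h C).elim Colorable.colorable_cliqueNum_of_two
    IsCompleteMultipartite.colorable_cliqueNum).mono (G.cliqueNum_induce_le C.supp)

def Embedding.induceConnectedComponent {H : SimpleGraph W} (f : H ↪g G)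
    (C : H.ConnectedComponent) : H.induce C.supp ↪g G.induce (C.map f.toHom).supp where
  toFun v := ⟨f v, (ConnectedComponent.mem_supp_iff _ _).2 <|
    (ConnectedComponent.map_mk f.toHom v).symm.trans (congrArg _ v.2)⟩
  inj' _ _ h := Subtype.val_injective (f.injective (congrArg Subtype.val h))
  map_rel_iff' := f.map_adj_iff

end SimpleGraph

open SimpleGraph

/-- A graph is perfect and paw-free iff each of its connected components is
bipartite or complete multipartite. -/
theorem isPerfect_and_pawFree_iff_components {V : Type*} [Fintype V]
    (G : SimpleGraph V) :
    G.IsPerfect ∧ G.PawFree ↔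
      ∀ c : G.ConnectedComponent,
        (G.induce c.supp).Colorable 2 ∨ (G.induce c.supp).IsCompleteMultipartite' := by
  simp only [isCompleteMultipartite'_iff]
  constructor
  · rintro ⟨hP, hG⟩ c
    by_cases h3 : (G.induce c.supp).CliqueFree 3
    · left
      rw [← chromaticNumber_le_iff_colorable, hP c.supp, Nat.cast_le]
      exact Nat.le_of_lt_succ (cliqueFree_iff_cliqueNum_lt.1 h3)
    · exact Or.inr ((hG.induce c.supp).isCompleteMultipartite_of_not_cliqueFree
        c.connected_toSimpleGraph.preconnected h3)
  · intro h
    refine ⟨fun S => chromaticNumber_eq_cliqueNum_of_forall_connectedComponent fun C => ?_,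
      pawFree_of_forall_connectedComponent fun c =>
        (h c).elim Colorable.pawFree IsCompleteMultipartite.pawFree⟩
    let f := (Embedding.induce S).induceConnectedComponent C
    exact (h _).imp (·.of_hom f.toHom) (·.comap f)
end

section
/- If every connected component of a simple graph G is bipartite or complete multipartite, then G is perfectly colorable. -/
/-!
Colour each connected component on its own; a connected vertex set lies in a single component.
A bipartite component gets a proper 2-colouring: a connected set then sees at most two colours,
and it sees two only if it contains an edge. A complete multipartite component gets one colour
per part, so two of its vertices get different colours exactly when they are adjacent, and one
vertex of each colour seen by a set forms a clique. Conversely a clique sees pairwise distinct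
colours under any proper colouring.
-/

namespace SimpleGraph

variable {V α : Type*} {G : SimpleGraph V}

theorem exists_isClique_ncard_eq_cliqueNum_induce (S : Set V) :
    ∃ t ⊆ S, G.IsClique t ∧ t.ncard = (G.induce S).cliqueNum := by
  obtain ⟨s, hs⟩ := (G.induce S).exists_isNClique_cliqueNum
  rw [isNClique_induce_iff] at hs
  refine ⟨_, ?_, hs.isClique, by rw [Set.ncard_coe_finset, hs.card_eq]⟩
  simp

theorem ncard_le_cliqueNum_induce [Finite V] {S t : Set V} (htS : t ⊆ S) (ht : G.IsClique t) :
    t.ncard ≤ (G.induce S).cliqueNum := by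
  set t' : Set S := Subtype.val ⁻¹' t
  have htS' : t ⊆ Set.range (Subtype.val : S → V) := by simpa using htS
  have hclique : (G.induce S).IsClique t' := by
    rwa [isClique_induce_iff, Set.image_preimage_eq_of_subset htS']
  calc t.ncard = t'.ncard :=
        (Set.ncard_preimage_of_injective_subset_range Subtype.val_injective htS').symm
    _ = t'.toFinite.toFinset.card := Set.ncard_eq_toFinset_card t'
    _ ≤ _ := IsClique.card_le_cliqueNum (tc := by rwa [Set.Finite.coe_toFinset])

theorem cliqueNum_induce_le_ncard_image [Finite V] {S : Set V} {g : V → α}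
    (hg : ∀ v ∈ S, ∀ w ∈ S, G.Adj v w → g v ≠ g w) :
    (G.induce S).cliqueNum ≤ (g '' S).ncard := by
  obtain ⟨t, htS, ht, hcard⟩ := G.exists_isClique_ncard_eq_cliqueNum_induce S
  have hinj : Set.InjOn g t := fun v hv w hw hvw =>
    of_not_not fun hne => hg v (htS hv) w (htS hw) (ht hv hw hne) hvw
  calc (G.induce S).cliqueNum = (g '' t).ncard := by rw [hinj.ncard_image, hcard]
    _ ≤ (g '' S).ncard := Set.ncard_le_ncard (Set.image_mono htS) (S.toFinite.image g)

theorem ncard_image_le_cliqueNum_induce [Finite V] {S : Set V} {g : V → α}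
    (hg : ∀ v ∈ S, ∀ w ∈ S, g v ≠ g w → G.Adj v w) :
    (g '' S).ncard ≤ (G.induce S).cliqueNum := by
  obtain ⟨t, htS, hbij⟩ := Set.exists_subset_bijOn S g
  have ht : G.IsClique t := fun v hv w hw hne =>
    hg v (htS hv) w (htS hw) (hbij.injOn.ne hv hw hne)
  rw [← hbij.image_eq, hbij.injOn.ncard_image]
  exact ncard_le_cliqueNum_induce htS ht

theorem ncard_image_le_cliqueNum_induce_of_ncard_le_two [Finite V] {S : Set V}
    (hS : (G.induce S).Connected) {g : V → α} (h2 : (g '' S).ncard ≤ 2) :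
    (g '' S).ncard ≤ (G.induce S).cliqueNum := by
  obtain ⟨⟨v, hv⟩⟩ := hS.nonempty
  rcases S.subsingleton_or_nontrivial with hsub | hnontriv
  · calc (g '' S).ncard ≤ 1 := Set.ncard_le_one_iff_subsingleton.mpr (hsub.image g)
      _ = ({v} : Set V).ncard := (Set.ncard_singleton v).symm
      _ ≤ _ := ncard_le_cliqueNum_induce (by simpa using hv) (isClique_singleton v)
  · have : Nontrivial S := hnontriv.coe_sort
    obtain ⟨⟨w, hw⟩, hvw⟩ := hS.preconnected.exists_adj_of_nontrivial ⟨v, hv⟩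
    calc (g '' S).ncard ≤ 2 := h2
      _ = ({v, w} : Set V).ncard := (Set.ncard_pair fun h => hvw.ne (Subtype.ext h)).symm
      _ ≤ _ := ncard_le_cliqueNum_induce (Set.pair_subset hv hw) (isClique_pair.mpr fun _ => hvw)

def IsPerfectColoringOn (G : SimpleGraph V) (s : Set V) (g : V → α) : Prop :=
  (∀ v ∈ s, ∀ w ∈ s, G.Adj v w → g v ≠ g w) ∧
    ∀ S ⊆ s, (G.induce S).Connected → (g '' S).ncard = (G.induce S).cliqueNum

theorem isPerfectColoringOn_of_ncard_image_le [Finite V] {s : Set V} {g : V → α}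
    (hg : ∀ v ∈ s, ∀ w ∈ s, G.Adj v w → g v ≠ g w)
    (hle : ∀ S ⊆ s, (G.induce S).Connected → (g '' S).ncard ≤ (G.induce S).cliqueNum) :
    G.IsPerfectColoringOn s g :=
  ⟨hg, fun S hS hconn => (hle S hS hconn).antisymm <|
    cliqueNum_induce_le_ncard_image fun v hv w hw => hg v (hS hv) w (hS hw)⟩

theorem exists_isPerfectColoringOn_of_colorable_two [Finite V] {s : Set V}
    (h : (G.induce s).Colorable 2) : ∃ g : V → ℕ, G.IsPerfectColoringOn s g := by
  classical
  obtain ⟨b⟩ := h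
  let g : V → ℕ := fun v => if hv : v ∈ s then b ⟨v, hv⟩ else 0
  have hg : ∀ v (hv : v ∈ s), g v = b ⟨v, hv⟩ := fun v hv => dif_pos hv
  have hg_lt : ∀ v, g v < 2 := fun v => by
    by_cases hv : v ∈ s
    · exact hg v hv ▸ (b ⟨v, hv⟩).isLt
    · simp [g, hv]
  refine ⟨g, isPerfectColoringOn_of_ncard_image_le (fun v hv w hw hadj => ?_) fun S _ hS => ?_⟩
  · rw [hg v hv, hg w hw]
    exact Fin.val_injective.ne (b.valid (show (G.induce s).Adj ⟨v, hv⟩ ⟨w, hw⟩ from hadj))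
  · have himg : g '' S ⊆ ↑(Finset.range 2) := by
      rintro _ ⟨v, -, rfl⟩
      simpa using hg_lt v
    refine ncard_image_le_cliqueNum_induce_of_ncard_le_two hS ?_
    calc (g '' S).ncard ≤ (↑(Finset.range 2) : Set ℕ).ncard :=
          Set.ncard_le_ncard himg (Finset.finite_toSet _)
      _ = 2 := by simp

theorem exists_isPerfectColoringOn_of_isCompleteMultipartite [Finite V] {s : Set V}
    (h : (G.induce s).IsCompleteMultipartite) : ∃ g : V → ℕ, G.IsPerfectColoringOn s g := by
  classical
  obtain ⟨k, hk⟩ := Countable.exists_injective_nat (Quotient h.setoid)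
  let g : V → ℕ := fun v => if hv : v ∈ s then k (Quotient.mk h.setoid ⟨v, hv⟩) else 0
  have hg : ∀ v ∈ s, ∀ w ∈ s, g v = g w ↔ ¬ G.Adj v w := fun v hv w hw => by
    simp only [g, dif_pos hv, dif_pos hw, hk.eq_iff, Quotient.eq]
    rfl
  refine ⟨g, isPerfectColoringOn_of_ncard_image_le (fun v hv w hw hadj => ?_) fun S hSs _ => ?_⟩
  · exact fun hvw => (hg v hv w hw).mp hvw hadj
  · exact ncard_image_le_cliqueNum_induce fun v hv w hw hvw =>
      of_not_not fun hadj => hvw ((hg v (hSs hv) w (hSs hw)).mpr hadj)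

theorem subset_connectedComponentMk_supp_of_connected_induce {S : Set V}
    (hS : (G.induce S).Connected) {v : V} (hv : v ∈ S) : S ⊆ (G.connectedComponentMk v).supp :=
  fun u hu => ConnectedComponent.sound <|
    (hS.preconnected ⟨u, hu⟩ ⟨v, hv⟩).map (Embedding.induce S).toHom

theorem perfectlyColorable_of_forall_connectedComponent {α : Type}
    (h : ∀ c : G.ConnectedComponent, ∃ g : V → α, G.IsPerfectColoringOn c.supp g) :
    G.PerfectlyColorable := by
  choose g hg using h
  let f : V → α := fun v => g (G.connectedComponentMk v) v
  refine ⟨α, Coloring.mk f fun {v w} hadj => ?_, fun S hS => ?_⟩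
  · have hvw := ConnectedComponent.connectedComponentMk_eq_of_adj hadj
    show g _ v ≠ g _ w
    rw [← hvw]
    exact (hg _).1 v rfl w hvw.symm hadj
  · obtain ⟨v, hv⟩ := hS.nonempty
    have hSv := subset_connectedComponentMk_supp_of_connected_induce hS hv
    have hfg : f '' S = g (G.connectedComponentMk v) '' S :=
      Set.image_congr fun u hu => by
        show g _ u = _
        rw [show G.connectedComponentMk u = _ from hSv hu]
    exact hfg ▸ (hg _).2 S hSv hS

end SimpleGraph

/-- If each connected component of a graph is bipartite or complete
multipartite, then the graph is perfectly colorable. -/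
theorem perfectlyColorable_of_components {V : Type*} [Fintype V]
    (G : SimpleGraph V)
    (h : ∀ c : G.ConnectedComponent,
      (G.induce c.supp).Colorable 2 ∨ (G.induce c.supp).IsCompleteMultipartite') :
    G.PerfectlyColorable :=
  SimpleGraph.perfectlyColorable_of_forall_connectedComponent fun c =>
    (h c).elim SimpleGraph.exists_isPerfectColoringOn_of_colorable_two fun hc =>
      SimpleGraph.exists_isPerfectColoringOn_of_isCompleteMultipartite
        ⟨fun _ _ _ huv hvw => hc huv hvw⟩
end

section
/- If a simple graph G is perfect and paw-free, then G is perfectly colorable. -/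
namespace SimpleGraph

variable {V α : Type*} {G : SimpleGraph V}

theorem cliqueNum_lt_of_cliqueFree {n : ℕ} (h : G.CliqueFree n) : G.cliqueNum < n := by
  by_contra! hn
  obtain ⟨s, hs⟩ := G.exists_isNClique_cliqueNum
  exact h.mono hn s hs

theorem IsClique.ncard_le_cliqueNum [Finite V] {s : Set V} (h : G.IsClique s) :
    s.ncard ≤ G.cliqueNum := by
  rw [Set.ncard_eq_toFinset_card s]
  exact IsClique.card_le_cliqueNum (tc := by simpa)

theorem Coloring.cliqueNum_le_ncard_range [Finite V] (C : G.Coloring α) :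
    G.cliqueNum ≤ (Set.range C).ncard := by
  obtain ⟨s, hs⟩ := G.exists_isNClique_cliqueNum
  rw [← hs.card_eq, ← Set.ncard_coe_finset]
  exact Set.ncard_le_ncard_of_injOn C (fun v _ => Set.mem_range_self v)
    (fun u hu w hw h => by_contra fun hne => C.valid (hs.isClique hu hw hne) h)

theorem ncard_range_le_cliqueNum [Finite V] (f : V → α) (hf : ∀ u v, f u ≠ f v → G.Adj u v) :
    (Set.range f).ncard ≤ G.cliqueNum := by
  have hclique : G.IsClique (Set.range (Set.rangeSplitting f)) := by
    rintro _ ⟨x, rfl⟩ _ ⟨y, rfl⟩ hxy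
    refine hf _ _ fun h => hxy (congrArg _ (Subtype.ext ?_))
    rwa [Set.apply_rangeSplitting f, Set.apply_rangeSplitting f] at h
  calc (Set.range f).ncard = (Set.range (Set.rangeSplitting f)).ncard := by
        rw [Set.ncard_range_of_injective (Set.rangeSplitting_injective f), Nat.card_coe_set_eq]
    _ ≤ G.cliqueNum := hclique.ncard_le_cliqueNum

theorem Connected.ncard_range_le_cliqueNum [Finite V] (hG : G.Connected) (C : G.Coloring α)
    (h2 : (Set.range C).ncard ≤ 2) : (Set.range C).ncard ≤ G.cliqueNum := by
  rcases eq_or_ne G ⊥ with rfl | hE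
  · obtain ⟨_, ⟨v⟩⟩ := connected_bot_iff.1 hG
    calc (Set.range C).ncard ≤ ({v} : Set V).ncard :=
          (Set.ncard_le_one_iff_subsingleton.2 (Set.subsingleton_range C)).trans_eq
            (Set.ncard_singleton v).symm
      _ ≤ _ := (isClique_singleton v).ncard_le_cliqueNum
  · obtain ⟨u, v, huv⟩ := ne_bot_iff_exists_adj.1 hE
    calc (Set.range C).ncard ≤ ({u, v} : Set V).ncard := h2.trans (Set.ncard_pair huv.ne).ge
      _ ≤ G.cliqueNum := (isClique_pair.2 fun _ => huv).ncard_le_cliqueNum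

theorem Coloring.isPerfectColoring_of_ncard_image_le [Finite V] (C : G.Coloring α)
    (h : ∀ S : Set V, (G.induce S).Connected → (C '' S).ncard ≤ (G.induce S).cliqueNum) :
    G.IsPerfectColoring C := fun S hS =>
  (h S hS).antisymm <| by
    rw [Set.image_eq_range]
    exact Coloring.cliqueNum_le_ncard_range (C.comp (Embedding.induce S).toHom)

theorem IsPerfectColoring.perfectlyColorable [Finite α] {C : G.Coloring α}
    (h : G.IsPerfectColoring C) : G.PerfectlyColorable := by
  let e := (Finite.equivFin α).toEmbedding
  refine ⟨_, G.recolorOfEmbedding e C, fun S hS => ?_⟩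
  change (e ∘ C '' S).ncard = _
  rw [Set.image_comp, Set.ncard_image_of_injective _ e.injective, h S hS]

theorem IsPerfect.colorable_induce_of_cliqueFree (hp : G.IsPerfect) (S : Set V) {n : ℕ}
    (h : (G.induce S).CliqueFree (n + 1)) : (G.induce S).Colorable n := by
  rw [← chromaticNumber_le_iff_colorable, hp S]
  exact_mod_cast Nat.lt_succ_iff.1 (cliqueNum_lt_of_cliqueFree h)

theorem Reachable.of_forall_adj {P : V → Prop} (hP : ∀ ⦃u v⦄, G.Adj u v → P u → P v) {u v : V}
    (h : G.Reachable u v) (hu : P u) : P v := by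
  obtain ⟨p⟩ := h
  induction p with
  | nil => exact hu
  | cons huw _ ih => exact ih (hP huw hu)

def InTriangle (G : SimpleGraph V) (v : V) : Prop :=
  ∃ a b, G.Adj v a ∧ G.Adj v b ∧ G.Adj a b

theorem cliqueFree_three_induce_not_inTriangle :
    (G.induce {v | ¬G.InTriangle v}).CliqueFree 3 := by
  classical
  intro s hs
  obtain ⟨a, b, c, hab, hac, hbc, -⟩ := is3Clique_iff.1 hs
  exact a.2 ⟨b, c, hab, hac, hbc⟩

namespace PawFree

theorem adj_or_adj {a b c d : V} (hf : G.PawFree) (hab : G.Adj a b) (hac : G.Adj a c)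
    (hbc : G.Adj b c) (hcd : G.Adj c d) : G.Adj a d ∨ G.Adj b d := by
  by_contra! ⟨had, hbd⟩
  let f : Fin 4 → V := ![a, b, c, d]
  have hadj : ∀ i j, G.Adj (f i) (f j) ↔ pawGraph.Adj i j := by
    intro i j
    fin_cases i <;> fin_cases j <;> simp [f, pawGraph, hab, hac, hbc, hcd, hab.symm, hac.symm,
      hbc.symm, hcd.symm, had, hbd, mt G.adj_symm had, mt G.adj_symm hbd]
  -- the four vertices of the paw have pairwise distinct neighbourhoods
  have hinj : f.Injective := by
    intro i j hij
    have : ∀ k, pawGraph.Adj i k ↔ pawGraph.Adj j k := fun k => by rw [← hadj, ← hadj, hij]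
    revert this
    fin_cases i <;> fin_cases j <;> simp [pawGraph] <;> decide
  obtain ⟨S, ⟨e⟩⟩ := isIndContained_iff_exists_iso_induce.1 ⟨⟨⟨f, hinj⟩, hadj _ _⟩⟩
  exact hf ⟨S, ⟨e.symm⟩⟩

theorem exists_adj_adj_of_inTriangle {x w : V} (hf : G.PawFree) (hx : G.InTriangle x)
    (hxw : G.Adj x w) : ∃ s, G.Adj x s ∧ G.Adj w s := by
  obtain ⟨a, b, hxa, hxb, hab⟩ := hx
  rcases hf.adj_or_adj hab hxa.symm hxb.symm hxw with haw | hbw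
  · exact ⟨a, hxa, haw.symm⟩
  · exact ⟨b, hxb, hbw.symm⟩

theorem inTriangle_of_adj {x w : V} (hf : G.PawFree) (hx : G.InTriangle x) (hxw : G.Adj x w) :
    G.InTriangle w :=
  have ⟨s, hxs, hws⟩ := hf.exists_adj_adj_of_inTriangle hx hxw
  ⟨x, s, hxw.symm, hws, hxs⟩

theorem inTriangle_of_reachable {x w : V} (hf : G.PawFree) (hx : G.InTriangle x)
    (h : G.Reachable x w) : G.InTriangle w :=
  h.of_forall_adj (fun _ _ huv hu => hf.inTriangle_of_adj hu huv) hx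

theorem adj_of_adj_of_not_adj {x z s u y : V} (hf : G.PawFree) (hxz : G.Adj x z)
    (hxs : G.Adj x s) (hzs : G.Adj z s) (hux : G.Adj u x) (huy : G.Adj u y)
    (hxy : ¬G.Adj x y) (hzy : ¬G.Adj z y) : G.Adj u z := by
  by_contra huz
  have hsu : G.Adj s u :=
    (hf.adj_or_adj hzs hxz.symm hxs.symm hux.symm).resolve_left fun h => huz h.symm
  have hsy : G.Adj s y := (hf.adj_or_adj hxs hux.symm hsu huy).resolve_left hxy
  exact (hf.adj_or_adj hxz hxs hzs hsy).elim hxy hzy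

theorem not_adj_of_adj_of_not_adj {x z s y b : V} (hf : G.PawFree) (hxz : G.Adj x z)
    (hxs : G.Adj x s) (hzs : G.Adj z s) (hyb : G.Adj y b) (hxy : ¬G.Adj x y)
    (hzy : ¬G.Adj z y) : ¬G.Adj x b ∧ ¬G.Adj z b := by
  have key : ∀ {x z}, G.Adj x z → G.Adj x s → G.Adj z s → ¬G.Adj x y → ¬G.Adj z y →
      ¬G.Adj x b := fun hxz hxs hzs hxy hzy hxb =>
    (hf.adj_or_adj hxz hxb (hf.adj_of_adj_of_not_adj hxz hxs hzs hxb.symm hyb.symm hxy hzy).symm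
      hyb.symm).elim hxy hzy
  exact ⟨key hxz hxs hzs hxy hzy, key hxz.symm hzs hxs hzy hxy⟩

/-- Olariu's theorem, in the form: in the component of a triangle, every vertex sees at least one
end of every edge. -/
theorem adj_or_adj_of_reachable {x z y : V} (hf : G.PawFree) (hx : G.InTriangle x)
    (hxz : G.Adj x z) (hxy : G.Reachable x y) : G.Adj x y ∨ G.Adj z y := by
  obtain ⟨s, hxs, hzs⟩ := hf.exists_adj_adj_of_inTriangle hx hxz
  by_contra! hy
  have := hxy.symm.of_forall_adj (P := fun v => ¬G.Adj x v ∧ ¬G.Adj z v)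
    (fun _ _ hvw hv => hf.not_adj_of_adj_of_not_adj hxz hxs hzs hvw hv.1 hv.2) hy
  exact this.2 hxz.symm

theorem neighborSet_eq_of_not_adj {u w : V} (hf : G.PawFree) (hu : G.InTriangle u)
    (huw : G.Reachable u w) (hnadj : ¬G.Adj u w) : G.neighborSet u = G.neighborSet w := by
  have hw := hf.inTriangle_of_reachable hu huw
  ext t
  exact ⟨fun hut => ((hf.adj_or_adj_of_reachable hu hut huw).resolve_left hnadj).symm,
    fun hwt => ((hf.adj_or_adj_of_reachable hw hwt huw.symm).resolve_left
      fun h => hnadj h.symm).symm⟩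

open scoped Classical in
noncomputable def coloring {β : Type*} (hf : G.PawFree)
    (b : (G.induce {v | ¬G.InTriangle v}).Coloring β) : G.Coloring (Set V ⊕ β) :=
  Coloring.mk (fun v => if h : G.InTriangle v then .inl (G.neighborSet v) else .inr (b ⟨v, h⟩))
    fun {u w} huw => by
      by_cases hu : G.InTriangle u
      · rw [dif_pos hu, dif_pos (hf.inTriangle_of_adj hu huw), ne_eq, Sum.inl.injEq]
        exact fun h => G.irrefl (show w ∈ G.neighborSet w from h ▸ huw)
      · have hw : ¬G.InTriangle w := fun hw => hu (hf.inTriangle_of_adj hw huw.symm)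
        rw [dif_neg hu, dif_neg hw, ne_eq, Sum.inr.injEq]
        exact b.valid huw

theorem coloring_of_inTriangle {β : Type*} (hf : G.PawFree)
    (b : (G.induce {v | ¬G.InTriangle v}).Coloring β) {v : V} (hv : G.InTriangle v) :
    hf.coloring b v = .inl (G.neighborSet v) :=
  dif_pos hv

theorem coloring_of_not_inTriangle {β : Type*} (hf : G.PawFree)
    (b : (G.induce {v | ¬G.InTriangle v}).Coloring β) {v : V} (hv : ¬G.InTriangle v) :
    hf.coloring b v = .inr (b ⟨v, hv⟩) :=
  dif_neg hv

theorem isPerfectColoring_coloring [Finite V] (hf : G.PawFree)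
    (b : (G.induce {v | ¬G.InTriangle v}).Coloring (Fin 2)) :
    G.IsPerfectColoring (hf.coloring b) := by
  refine (hf.coloring b).isPerfectColoring_of_ncard_image_le fun S hS => ?_
  have hreach : ∀ u w : S, G.Reachable u w := fun u w =>
    (hS.preconnected u w).map (Embedding.induce S).toHom
  rw [Set.image_eq_range]
  by_cases hT : ∃ v : S, G.InTriangle v
  · obtain ⟨v, hv⟩ := hT
    have hS_tri : ∀ u : S, G.InTriangle u := fun u => hf.inTriangle_of_reachable hv (hreach v u)
    refine ncard_range_le_cliqueNum _ fun u w huw => by_contra fun hnadj => huw ?_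
    rw [hf.coloring_of_inTriangle b (hS_tri u), hf.coloring_of_inTriangle b (hS_tri w),
      hf.neighborSet_eq_of_not_adj (hS_tri u) (hreach u w) hnadj]
  · push Not at hT
    refine hS.ncard_range_le_cliqueNum ((hf.coloring b).comp (Embedding.induce S).toHom) ?_
    have hsub : (Set.range fun u : S => hf.coloring b u) ⊆ Set.range Sum.inr := by
      rintro _ ⟨u, rfl⟩
      exact ⟨_, (hf.coloring_of_not_inTriangle b (hT u)).symm⟩
    calc (Set.range fun u : S => hf.coloring b u).ncard
        ≤ (Set.range (Sum.inr : Fin 2 → Set V ⊕ Fin 2)).ncard := Set.ncard_le_ncard hsub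
      _ = 2 := by rw [Set.ncard_range_of_injective Sum.inr_injective, Nat.card_fin]

end PawFree

end SimpleGraph

/-- If a graph is perfect and paw-free, then it is perfectly colorable. -/
theorem perfectlyColorable_of_isPerfect_and_pawFree {V : Type*} [Fintype V]
    (G : SimpleGraph V) (hp : G.IsPerfect) (hf : G.PawFree) :
    G.PerfectlyColorable := by
  obtain ⟨b⟩ := hp.colorable_induce_of_cliqueFree _ G.cliqueFree_three_induce_not_inTriangle
  exact (hf.isPerfectColoring_coloring b).perfectlyColorable
end
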